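/- Let G = (V, E) be a DAG on a finite vertex set of size n with source s and destination t, s ≠ t, such that: every vertex and every edge of G lies on some directed s-t path; deg(s) ≥ 2 and deg(t) ≥ 2; and there do not exist vertices x, y, z with (x,y) ∈ E, (y,z) ∈ E and deg(x) = deg(y) = 2. Then the number of directed s-t paths of G is at least n/5. -/

import Mathlib

/-- `IsPathList E s t l` means that `l` is a directed `s`-`t` path of the directed graph
`E`: a list of pairwise distinct vertices starting at `s` and ending at `t` in which
every pair of consecutive vertices is joined by an edge of `E`. -/
def IsPathList {V : Type*} (E : V → V → Prop) (s t : V) (l : List V) : Prop :=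
  l.Chain' E ∧ l.head? = some s ∧ l.getLast? = some t ∧ l.Nodup

/-- The degree of a vertex of a directed graph: in-degree plus out-degree. -/
def degree {V : Type*} [Fintype V] (E : V → V → Prop) [DecidableRel E] (v : V) : ℕ :=
  (Finset.univ.filter (fun u => E u v)).card + (Finset.univ.filter (fun u => E v u)).card

/-!
Let `P(v)` be the number of `v`-`t` paths and `m` the number of edges. Since the graph is
acyclic, `P(v) = ∑ P(w)` over the out-neighbours `w` of `v ≠ t`, and since every vertex
reaches `t`, induction along the DAG gives `P(v) > ∑ (outdeg u - 1)` over the descendants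
`u ≠ t` of `v`; at `v = s` this says `P(s) ≥ m - n + 2`.

Let `B` be the set of vertices of degree two. Every vertex has degree at least two, so
`2m = ∑ deg ≥ 2|B| + 3(n - |B|)`. Every vertex of `B ∖ {t}` has an out-edge, and every vertex
of `B ∖ {s, t}` has an in-edge, whose source is not in `B` by the last hypothesis; these edges
are pairwise distinct, so `m ≥ 2|B| - 3`. Together, `6n ≤ 5m + 3 ≤ 5P(s) + 5n - 7`.
-/

open Finset Relation

theorem Finset.sum_biUnion_le {ι α M : Type*} [DecidableEq α] [AddCommMonoid M]
    [PartialOrder M] [CanonicallyOrderedAdd M] (s : Finset ι) (t : ι → Finset α)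
    (f : α → M) : ∑ a ∈ s.biUnion t, f a ≤ ∑ i ∈ s, ∑ a ∈ t i, f a := by
  have : s.biUnion t = (s.sigma t).image Sigma.snd := by ext; simp
  rw [this]
  exact (sum_image_le_of_nonneg fun _ _ => zero_le).trans_eq (sum_sigma _ _ _)

theorem Finset.sum_insert_le {α M : Type*} [DecidableEq α] [AddCommMonoid M] [PartialOrder M]
    [CanonicallyOrderedAdd M] (s : Finset α) (a : α) (f : α → M) :
    ∑ x ∈ insert a s, f x ≤ f a + ∑ x ∈ s, f x := by
  by_cases ha : a ∈ s
  · rw [insert_eq_of_mem ha]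
    exact le_add_self
  · rw [sum_insert ha]

theorem List.Pairwise.rel_of_head?_eq_some {α : Type*} {R : α → α → Prop} {l : List α}
    {a b : α} (hR : ∀ a, R a a) (hl : l.Pairwise R) (ha : l.head? = some a) (hb : b ∈ l) :
    R a b := by
  obtain _ | ⟨x, l⟩ := l
  · simp at ha
  obtain rfl : x = a := by simpa using ha
  obtain rfl | hb := List.mem_cons.mp hb
  exacts [hR b, List.rel_of_pairwise_cons hl hb]

theorem Relation.ReflTransGen.exists_rel_of_ne {α : Type*} {r : α → α → Prop} {a b : α}
    (h : ReflTransGen r a b) (hab : a ≠ b) : ∃ c, r a c :=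
  (h.cases_head.resolve_left hab).imp fun _ => And.left

theorem Relation.ReflTransGen.exists_rel_of_ne' {α : Type*} {r : α → α → Prop} {a b : α}
    (h : ReflTransGen r a b) (hab : b ≠ a) : ∃ c, r c b :=
  (h.cases_tail.resolve_left hab).imp fun _ => And.right

theorem wellFounded_swap_transGen {α : Type*} [Finite α] {r : α → α → Prop}
    (hr : ∀ a, ¬ TransGen r a a) : WellFounded (fun a b => TransGen r b a) :=
  haveI : IsTrans α (fun a b => TransGen r b a) := ⟨fun _ _ _ h₁ h₂ => h₂.trans h₁⟩
  haveI : Std.Irrefl (fun a b => TransGen r b a) := ⟨hr⟩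
  Finite.wellFounded_of_trans_of_irrefl _

namespace IsPathList

variable {V : Type*} {E : V → V → Prop} {s t a : V} {l : List V}

theorem reflTransGen_of_mem (h : IsPathList E s t l) (ha : a ∈ l) :
    ReflTransGen E s a ∧ ReflTransGen E a t := by
  have hp : l.Pairwise (ReflTransGen E) :=
    List.isChain_iff_pairwise.mp (h.1.imp fun _ _ => ReflTransGen.single)
  refine ⟨hp.rel_of_head?_eq_some (fun _ => .refl) h.2.1 ha, ?_⟩
  refine (List.pairwise_reverse.mpr hp).rel_of_head?_eq_some (R := flip (ReflTransGen E))
    (fun _ => .refl) ?_ (List.mem_reverse.mpr ha)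
  simpa using h.2.2.1

theorem cons {u v : V} (h : IsPathList E u t l) (hvu : E v u) (hv : v ∉ l) :
    IsPathList E v t (v :: l) := by
  obtain ⟨hc, hu, ht, hnd⟩ := h
  obtain _ | ⟨x, l⟩ := l
  · simp at hu
  obtain rfl : x = u := by simpa using hu
  exact ⟨List.isChain_cons_cons.mpr ⟨hvu, hc⟩, rfl, by simpa using ht,
    List.nodup_cons.mpr ⟨hv, hnd⟩⟩

theorem exists_eq_cons {v : V} (h : IsPathList E v t l) (hvt : v ≠ t) :
    ∃ u l', l = v :: l' ∧ E v u ∧ IsPathList E u t l' := by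
  obtain ⟨hc, hv, ht, hnd⟩ := h
  obtain _ | ⟨x, _ | ⟨u, l⟩⟩ := l
  · simp at hv
  · simp_all
  obtain rfl : x = v := by simpa using hv
  obtain ⟨hvu, hc⟩ := List.isChain_cons_cons.mp hc
  exact ⟨u, u :: l, rfl, hvu, hc, rfl, by simpa using ht, (List.nodup_cons.mp hnd).2⟩

end IsPathList

section Degrees

variable {V : Type*} [Fintype V] (E : V → V → Prop) [DecidableRel E]

def outNbrs (v : V) : Finset V := univ.filter (E v ·)

def inNbrs (v : V) : Finset V := univ.filter (E · v)

theorem degree_eq_card_inNbrs_add_card_outNbrs (v : V) :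
    degree E v = #(inNbrs E v) + #(outNbrs E v) := rfl

theorem sum_degree_eq_two_mul : ∑ v, degree E v = 2 * ∑ v, #(outNbrs E v) := by
  have : ∑ v, #(inNbrs E v) = ∑ v, #(outNbrs E v) :=
    (sum_card_bipartiteAbove_eq_sum_card_bipartiteBelow E).symm
  simp only [degree_eq_card_inNbrs_add_card_outNbrs, sum_add_distrib, this, two_mul]

variable {E}

theorem card_outNbrs_pos {v : V} : 0 < #(outNbrs E v) ↔ ∃ w, E v w := by
  simp [outNbrs, card_pos, Finset.Nonempty]

theorem card_inNbrs_pos {v : V} : 0 < #(inNbrs E v) ↔ ∃ u, E u v := by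
  simp [inNbrs, card_pos, Finset.Nonempty]

theorem two_le_degree {v : V} (hin : ∃ u, E u v) (hout : ∃ w, E v w) : 2 ≤ degree E v := by
  have := card_inNbrs_pos.mpr hin
  have := card_outNbrs_pos.mpr hout
  rw [degree_eq_card_inNbrs_add_card_outNbrs]
  omega

theorem three_mul_card_le_sum_degree_add_card_degree_eq_two (h : ∀ v, 2 ≤ degree E v) :
    3 * Fintype.card V ≤ ∑ v, degree E v + #{v | degree E v = 2} := by
  rw [card_filter, ← sum_add_distrib, ← card_univ, mul_comm, ← smul_eq_mul, ← sum_const]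
  refine sum_le_sum fun v _ => ?_
  have := h v
  split_ifs <;> omega

variable [DecidableEq V]

theorem card_le_sum_card_outNbrs {X Y : Finset V} (h : ∀ y ∈ Y, ∃ x ∈ X, E x y) :
    #Y ≤ ∑ x ∈ X, #(outNbrs E x) := by
  refine (card_le_card fun y hy => ?_).trans card_biUnion_le
  obtain ⟨x, hx, hxy⟩ := h y hy
  exact mem_biUnion.mpr ⟨x, hx, by simpa [outNbrs] using hxy⟩

theorem two_mul_card_degree_eq_two_le {s t : V} (hout : ∀ v ≠ t, ∃ w, E v w)
    (hin : ∀ v ≠ s, ∃ u, E u v)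
    (hdeg2 : ¬ ∃ x y z : V, E x y ∧ E y z ∧ degree E x = 2 ∧ degree E y = 2) :
    2 * #{v | degree E v = 2} ≤ ∑ v, #(outNbrs E v) + 3 := by
  set B : Finset V := {v | degree E v = 2}
  set A : Finset V := {v | ¬ degree E v = 2}
  have hB : #(B.erase t) ≤ ∑ x ∈ B, #(outNbrs E x) := by
    rw [card_eq_sum_ones]
    refine (sum_le_sum fun x hx => ?_).trans (sum_le_sum_of_subset (erase_subset t B))
    exact card_outNbrs_pos.mpr (hout x (ne_of_mem_erase hx))
  have hA : #((B.erase t).erase s) ≤ ∑ x ∈ A, #(outNbrs E x) := by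
    refine card_le_sum_card_outNbrs fun y hy => ?_
    obtain ⟨hys, hyt, hy⟩ : y ≠ s ∧ y ≠ t ∧ degree E y = 2 := by simpa [B] using hy
    obtain ⟨x, hxy⟩ := hin y hys
    obtain ⟨z, hyz⟩ := hout y hyt
    exact ⟨x, by simpa [A] using fun hx => hdeg2 ⟨x, y, z, hxy, hyz, hx, hy⟩, hxy⟩
  have hsplit : ∑ x ∈ B, #(outNbrs E x) + ∑ x ∈ A, #(outNbrs E x) = ∑ v, #(outNbrs E v) :=
    sum_filter_add_sum_filter_not _ _ _
  have := pred_card_le_card_erase (s := B) (a := t)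
  have := pred_card_le_card_erase (s := B.erase t) (a := s)
  omega

end Degrees

section Paths

variable {V : Type*} [Fintype V]

theorem finite_setOf_isPathList (E : V → V → Prop) (s t : V) :
    {l | IsPathList E s t l}.Finite :=
  (List.finite_length_le V (Fintype.card V)).subset fun _ hl => hl.2.2.2.length_le_card

noncomputable def pathFinset (E : V → V → Prop) (s t : V) : Finset (List V) :=
  (finite_setOf_isPathList E s t).toFinset

open Classical in
noncomputable def descendants (E : V → V → Prop) (v : V) : Finset V :=
  univ.filter (ReflTransGen E v)

variable {E : V → V → Prop} {s t v : V}

theorem mem_pathFinset {l : List V} : l ∈ pathFinset E s t ↔ IsPathList E s t l :=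
  Set.Finite.mem_toFinset _

theorem ncard_setOf_isPathList : {l | IsPathList E s t l}.ncard = #(pathFinset E s t) :=
  Set.ncard_eq_toFinset_card _ _

theorem mem_descendants {u : V} : u ∈ descendants E v ↔ ReflTransGen E v u := by
  simp [descendants]

variable [DecidableEq V] [DecidableRel E]

theorem pathFinset_eq_biUnion (hdag : ∀ v, ¬ TransGen E v v) (hvt : v ≠ t) :
    pathFinset E v t = (outNbrs E v).biUnion fun u => (pathFinset E u t).image (List.cons v) := by
  ext l
  simp only [mem_pathFinset, mem_biUnion, mem_image, outNbrs, mem_filter, mem_univ, true_and]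
  constructor
  · intro h
    obtain ⟨u, l', rfl, hvu, hl'⟩ := h.exists_eq_cons hvt
    exact ⟨u, hvu, l', hl', rfl⟩
  · rintro ⟨u, hvu, l', hl', rfl⟩
    exact hl'.cons hvu fun hv => hdag v (.head' hvu (hl'.reflTransGen_of_mem hv).1)

theorem card_pathFinset_eq_sum (hdag : ∀ v, ¬ TransGen E v v) (hvt : v ≠ t) :
    #(pathFinset E v t) = ∑ u ∈ outNbrs E v, #(pathFinset E u t) := by
  rw [pathFinset_eq_biUnion hdag hvt, card_biUnion]
  · exact sum_congr rfl fun u _ => card_image_of_injective _ List.cons_injective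
  · intro u₁ _ u₂ _ hne
    simp only [Function.onFun, disjoint_left, mem_image, mem_pathFinset]
    rintro _ ⟨l, h₁, rfl⟩ ⟨l', h₂, h⟩
    obtain rfl := List.cons_injective h
    exact hne (Option.some_inj.mp (h₁.2.1.symm.trans h₂.2.1))

theorem erase_descendants_subset :
    (descendants E v).erase t ⊆
      insert v ((outNbrs E v).biUnion fun w => (descendants E w).erase t) := by
  intro u hu
  obtain ⟨hut, hvu⟩ := mem_erase.mp hu
  obtain rfl | ⟨w, hvw, hwu⟩ := (mem_descendants.mp hvu).cases_head
  · exact mem_insert_self _ _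
  · refine mem_insert_of_mem (mem_biUnion.mpr ⟨w, ?_, ?_⟩)
    · simpa [outNbrs] using hvw
    · exact mem_erase.mpr ⟨hut, mem_descendants.mpr hwu⟩

theorem sum_card_outNbrs_sub_one_lt_card_pathFinset (hdag : ∀ v, ¬ TransGen E v v)
    (hreach : ∀ v, ReflTransGen E v t) (v : V) :
    ∑ u ∈ (descendants E v).erase t, (#(outNbrs E u) - 1) < #(pathFinset E v t) := by
  induction v using (wellFounded_swap_transGen hdag).induction with
  | _ v ih =>
  rcases eq_or_ne v t with rfl | hvt
  · have hD : (descendants E v).erase v = ∅ := by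
      refine eq_empty_of_forall_notMem fun u hu => ?_
      obtain ⟨huv, hvu⟩ := mem_erase.mp hu
      obtain rfl | ⟨w, hvw, -⟩ := (mem_descendants.mp hvu).cases_head
      exacts [huv rfl, hdag v (.head' hvw (hreach w))]
    rw [hD, sum_empty, card_pos]
    exact ⟨[v], mem_pathFinset.mpr
      ⟨List.isChain_singleton v, rfl, rfl, List.nodup_singleton v⟩⟩
  set c : V → ℕ := fun u => #(outNbrs E u) - 1
  have hv : c v < #(outNbrs E v) :=
    Nat.sub_lt (card_outNbrs_pos.mpr ((hreach v).exists_rel_of_ne hvt)) one_pos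
  calc ∑ u ∈ (descendants E v).erase t, c u
      ≤ c v + ∑ w ∈ outNbrs E v, ∑ u ∈ (descendants E w).erase t, c u :=
        (sum_le_sum_of_subset erase_descendants_subset).trans <|
          (sum_insert_le _ _ _).trans (add_le_add le_rfl (sum_biUnion_le _ _ _))
    _ < #(outNbrs E v) + ∑ w ∈ outNbrs E v, ∑ u ∈ (descendants E w).erase t, c u := by omega
    _ = ∑ w ∈ outNbrs E v, (∑ u ∈ (descendants E w).erase t, c u + 1) := by
        rw [sum_add_distrib, card_eq_sum_ones, add_comm]
    _ ≤ ∑ w ∈ outNbrs E v, #(pathFinset E w t) :=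
        sum_le_sum fun w hw => ih w (.single (by simpa [outNbrs] using hw))
    _ = #(pathFinset E v t) := (card_pathFinset_eq_sum hdag hvt).symm

theorem sum_card_outNbrs_add_two_le_card_pathFinset_add_card (hdag : ∀ v, ¬ TransGen E v v)
    (hs : ∀ v, ReflTransGen E s v) (ht : ∀ v, ReflTransGen E v t) :
    ∑ v, #(outNbrs E v) + 2 ≤ #(pathFinset E s t) + Fintype.card V := by
  have key := sum_card_outNbrs_sub_one_lt_card_pathFinset hdag ht s
  have hpos : ∀ v ∈ univ.erase t, 1 ≤ #(outNbrs E v) := fun v hv =>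
    card_outNbrs_pos.mpr ((ht v).exists_rel_of_ne (ne_of_mem_erase hv))
  have hout_t : #(outNbrs E t) = 0 := by
    rw [card_eq_zero, ← not_nonempty_iff_eq_empty, ← card_pos, card_outNbrs_pos]
    exact fun ⟨w, htw⟩ => hdag t (.head' htw (ht w))
  have hcard := card_nsmul_le_sum _ _ _ hpos
  rw [smul_eq_mul, mul_one] at hcard
  rw [eq_univ_of_forall fun v => mem_descendants.mpr (hs v), sum_tsub_distrib _ hpos,
    ← card_eq_sum_ones] at key
  rw [card_erase_of_mem (mem_univ t), card_univ,
    sum_erase (f := fun v => #(outNbrs E v)) _ hout_t] at key hcard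
  have : 0 < Fintype.card V := Fintype.card_pos_iff.mpr ⟨s⟩
  omega

end Paths

theorem reduced_dag_num_paths_general {V : Type*} [Fintype V] [DecidableEq V]
    (E : V → V → Prop) [DecidableRel E]
    (hdag : ∀ v, ¬ Relation.TransGen E v v) (s t : V)
    (hvert : ∀ v : V, ∃ l, IsPathList E s t l ∧ v ∈ l)
    (hs : 2 ≤ degree E s) (ht : 2 ≤ degree E t)
    (hdeg2 : ¬ ∃ x y z : V, E x y ∧ E y z ∧ degree E x = 2 ∧ degree E y = 2) :
    (Fintype.card V : ℚ) / 5 ≤ ({l : List V | IsPathList E s t l}.ncard : ℚ) := by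
  have hreach v : ReflTransGen E s v ∧ ReflTransGen E v t := by
    obtain ⟨l, hl, hv⟩ := hvert v
    exact hl.reflTransGen_of_mem hv
  have hout : ∀ v ≠ t, ∃ w, E v w := fun v hvt => (hreach v).2.exists_rel_of_ne hvt
  have hin : ∀ v ≠ s, ∃ u, E u v := fun v hvs => (hreach v).1.exists_rel_of_ne' hvs
  have hdeg v : 2 ≤ degree E v := by
    rcases eq_or_ne v s with rfl | hvs
    · exact hs
    rcases eq_or_ne v t with rfl | hvt
    · exact ht
    exact two_le_degree (hin v hvs) (hout v hvt)
  have hpaths := sum_card_outNbrs_add_two_le_card_pathFinset_add_card hdag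
    (fun v => (hreach v).1) (fun v => (hreach v).2)
  have hdegsum := three_mul_card_le_sum_degree_add_card_degree_eq_two hdeg
  have hhandshake := sum_degree_eq_two_mul E
  have hdeg_two := two_mul_card_degree_eq_two_le hout hin hdeg2
  rw [ncard_setOf_isPathList, div_le_iff₀ (by norm_num)]
  exact_mod_cast (by omega : Fintype.card V ≤ #(pathFinset E s t) * 5)

/-- In a reduced DAG on `n` vertices — every vertex and edge lies on some directed
`s`-`t` path, `deg(s) ≥ 2`, `deg(t) ≥ 2`, and no two consecutive vertices `x, y` starting
a path `x → y → z` both have degree exactly two — there are at least `n/5` directed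
`s`-`t` paths. -/
theorem reduced_dag_num_paths {V : Type*} [Fintype V] [DecidableEq V]
    (E : V → V → Prop) [DecidableRel E]
    (hdag : ∀ v, ¬ Relation.TransGen E v v) (s t : V) (hst : s ≠ t)
    (hvert : ∀ v : V, ∃ l, IsPathList E s t l ∧ v ∈ l)
    (hedge : ∀ a b : V, E a b → ∃ l, IsPathList E s t l ∧ [a, b] <:+: l)
    (hs : 2 ≤ degree E s) (ht : 2 ≤ degree E t)
    (hdeg2 : ¬ ∃ x y z : V, E x y ∧ E y z ∧ degree E x = 2 ∧ degree E y = 2) :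
    (Fintype.card V : ℚ) / 5 ≤ ({l : List V | IsPathList E s t l}.ncard : ℚ) :=
  reduced_dag_num_paths_general E hdag s t hvert hs ht hdeg2
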